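/- Let p1, r1 : I → ℝ be twice continuously differentiable and nonvanishing on an interval I, and suppose 2 r1 p1' r1' + 3 p1 (r1')² − 2 p1 r1 r1'' = 0 on I. Then the function t ↦ (r1'(t))²/(p1(t)² r1(t)³) is constant on I. -/

import Mathlib

/-! Differentiating `(r₁')² / (p₁² r₁³)` gives `-r₁' C / (p₁³ r₁⁴)`, where `C` is the left-hand
side of the constraint. So the quotient has zero derivative on the open interval `I`, and is
therefore constant there. -/

theorem hasDerivAt_sq_div_sq_mul_pow_three {u p r : ℝ → ℝ} {u' p' r' t : ℝ}
    (hu : HasDerivAt u u' t) (hp : HasDerivAt p p' t) (hr : HasDerivAt r r' t)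
    (hp0 : p t ≠ 0) (hr0 : r t ≠ 0) :
    HasDerivAt (fun y => u y ^ 2 / (p y ^ 2 * r y ^ 3))
      (u t * (2 * p t * r t * u' - 2 * r t * p' * u t - 3 * p t * r' * u t)
        / (p t ^ 3 * r t ^ 4)) t := by
  refine ((hu.fun_pow 2).fun_div ((hp.fun_pow 2).fun_mul (hr.fun_pow 3))
    (by simp [hp0, hr0])).congr_deriv ?_
  field_simp
  ring

theorem first_integral_of_constraint
    (I : Set ℝ) (hIopen : IsOpen I) (hIconn : I.OrdConnected)
    (p1 r1 : ℝ → ℝ)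
    (hp1 : ContDiffOn ℝ 2 p1 I) (hr1 : ContDiffOn ℝ 2 r1 I)
    (hp1ne : ∀ t ∈ I, p1 t ≠ 0) (hr1ne : ∀ t ∈ I, r1 t ≠ 0)
    (hconstr : ∀ t ∈ I, 2 * r1 t * deriv p1 t * deriv r1 t
        + 3 * p1 t * (deriv r1 t)^2 - 2 * p1 t * r1 t * deriv (deriv r1) t = 0) :
    ∀ s ∈ I, ∀ t ∈ I,
      (deriv r1 s)^2 / ((p1 s)^2 * (r1 s)^3)
        = (deriv r1 t)^2 / ((p1 t)^2 * (r1 t)^3) := by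
  have hasDerivAt_of_differentiableOn {f : ℝ → ℝ} (hf : DifferentiableOn ℝ f I) {t : ℝ}
      (ht : t ∈ I) : HasDerivAt f (deriv f t) t :=
    (hf.differentiableAt (hIopen.mem_nhds ht)).hasDerivAt
  have hdr1 : DifferentiableOn ℝ (deriv r1) I :=
    (hr1.deriv_of_isOpen hIopen (m := 1) (by norm_num)).differentiableOn one_ne_zero
  have hderiv_zero : ∀ t ∈ I,
      HasDerivAt (fun y => deriv r1 y ^ 2 / (p1 y ^ 2 * r1 y ^ 3)) 0 t := by
    intro t ht
    convert hasDerivAt_sq_div_sq_mul_pow_three (hasDerivAt_of_differentiableOn hdr1 ht)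
      (hasDerivAt_of_differentiableOn (hp1.differentiableOn two_ne_zero) ht)
      (hasDerivAt_of_differentiableOn (hr1.differentiableOn two_ne_zero) ht)
      (hp1ne t ht) (hr1ne t ht) using 1
    rw [eq_comm, div_eq_zero_iff]
    left
    linear_combination (-deriv r1 t) * hconstr t ht
  intro s hs t ht
  exact hIopen.is_const_of_deriv_eq_zero hIconn.isPreconnected
    (fun x hx => (hderiv_zero x hx).differentiableAt.differentiableWithinAt)
    (fun x hx => (hderiv_zero x hx).deriv) hs ht
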